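/- Let B be a closed subalgebra and I a closed ideal of a Banach algebra A such that A = B ⊕ I (Banach space direct sum). If A is approximately weakly amenable, then B is approximately weakly amenable; likewise, if A is approximately cyclic amenable, then B is approximately cyclic amenable. -/

import Mathlib

open ContinuousLinearMap Filter Topology

open ContinuousLinearMap Filter Topology

/-- A Banach `A`-bimodule: a complete normed `ℂ`-space with commuting continuous
left and right `A`-actions, jointly bounded and bilinear. -/
structure BBimod (A : Type) [NonUnitalNormedRing A] [NormedSpace ℂ A] where
  carrier : Type
  [grp : NormedAddCommGroup carrier]
  [mod : NormedSpace ℂ carrier]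
  [complete : CompleteSpace carrier]
  lsmul : A → carrier →L[ℂ] carrier
  rsmul : A → carrier →L[ℂ] carrier
  lsmul_add : ∀ a b, lsmul (a + b) = lsmul a + lsmul b
  rsmul_add : ∀ a b, rsmul (a + b) = rsmul a + rsmul b
  lsmul_smul : ∀ (c : ℂ) (a), lsmul (c • a) = c • lsmul a
  rsmul_smul : ∀ (c : ℂ) (a), rsmul (c • a) = c • rsmul a
  lsmul_mul : ∀ a b, lsmul (a * b) = (lsmul a).comp (lsmul b)
  rsmul_mul : ∀ a b, rsmul (a * b) = (rsmul b).comp (rsmul a)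
  lsmul_rsmul : ∀ a b, (lsmul a).comp (rsmul b) = (rsmul b).comp (lsmul a)
  bound : ∃ C : ℝ, ∀ a, ‖lsmul a‖ ≤ C * ‖a‖ ∧ ‖rsmul a‖ ≤ C * ‖a‖

attribute [instance] BBimod.grp BBimod.mod BBimod.complete

variable {A : Type} [NonUnitalNormedRing A] [NormedSpace ℂ A]

/-- The dual of a Banach bimodule, with the canonical dual actions
`⟨u, Λ·a⟩ = ⟨a·u, Λ⟩` and `⟨u, a·Λ⟩ = ⟨u·a, Λ⟩`. -/
noncomputable def BBimod.dual (M : BBimod A) : BBimod A where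
  carrier := M.carrier →L[ℂ] ℂ
  lsmul a := (compL ℂ M.carrier M.carrier ℂ).flip (M.rsmul a)
  rsmul a := (compL ℂ M.carrier M.carrier ℂ).flip (M.lsmul a)
  lsmul_add a b := by ext Λ x; simp [M.rsmul_add]
  rsmul_add a b := by ext Λ x; simp [M.lsmul_add]
  lsmul_smul c a := by ext Λ x; simp [M.rsmul_smul]
  rsmul_smul c a := by ext Λ x; simp [M.lsmul_smul]
  lsmul_mul a b := by ext Λ x; simp [M.rsmul_mul]
  rsmul_mul a b := by ext Λ x; simp [M.lsmul_mul]
  lsmul_rsmul a b := by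
    ext Λ x
    have h : M.lsmul b (M.rsmul a x) = M.rsmul a (M.lsmul b x) := by
      have := congrArg (fun T : M.carrier →L[ℂ] M.carrier => T x) (M.lsmul_rsmul b a)
      simpa using this
    simp [h]
  bound := by
    obtain ⟨C, hC⟩ := M.bound
    refine ⟨C, fun a => ⟨?_, ?_⟩⟩
    · refine opNorm_le_bound _ ?_ fun Λ => ?_
      · exact le_trans (norm_nonneg _) (hC a).2
      · calc ‖Λ.comp (M.rsmul a)‖ ≤ ‖Λ‖ * ‖M.rsmul a‖ := opNorm_comp_le _ _
          _ ≤ (C * ‖a‖) * ‖Λ‖ := by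
              rw [mul_comm]
              exact mul_le_mul_of_nonneg_right (hC a).2 (norm_nonneg _)
    · refine opNorm_le_bound _ ?_ fun Λ => ?_
      · exact le_trans (norm_nonneg _) (hC a).1
      · calc ‖Λ.comp (M.lsmul a)‖ ≤ ‖Λ‖ * ‖M.lsmul a‖ := opNorm_comp_le _ _
          _ ≤ (C * ‖a‖) * ‖Λ‖ := by
              rw [mul_comm]
              exact mul_le_mul_of_nonneg_right (hC a).1 (norm_nonneg _)

variable (A) [IsScalarTower ℂ A A] [SMulCommClass ℂ A A] [CompleteSpace A]

/-- `A` as a Banach bimodule over itself. -/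
noncomputable def BBimod.base : BBimod A where
  carrier := A
  lsmul a := ContinuousLinearMap.mul ℂ A a
  rsmul a := (ContinuousLinearMap.mul ℂ A).flip a
  lsmul_add a b := by ext x; simp [add_mul]
  rsmul_add a b := by ext x; simp [mul_add]
  lsmul_smul c a := by ext x; simp [smul_mul_assoc]
  rsmul_smul c a := by ext x; simp [mul_smul_comm]
  lsmul_mul a b := by ext x; simp [mul_assoc]
  rsmul_mul a b := by ext x; simp [mul_assoc]
  lsmul_rsmul a b := by ext x; simp [mul_assoc]
  bound := by
    refine ⟨1, fun a => ⟨?_, ?_⟩⟩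
    · simpa using ContinuousLinearMap.opNorm_mul_apply_le ℂ A a
    · refine le_trans (opNorm_le_bound _ (norm_nonneg a) fun x => ?_) (by simp)
      simpa [mul_comm] using norm_mul_le x a


/-- The `n`-th dual `A^(n)` of `A` as a Banach `A`-bimodule. -/
noncomputable def iterDual : ℕ → BBimod A
  | 0 => BBimod.base A
  | n + 1 => (iterDual n).dual

variable {A}

/-- `D` is a derivation from `A` into the Banach bimodule `M`. -/
def IsDerivation (M : BBimod A) (D : A →L[ℂ] M.carrier) : Prop :=
  ∀ a b : A, D (a * b) = M.lsmul a (D b) + M.rsmul b (D a)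

/-- `D` is an inner derivation. -/
def IsInner (M : BBimod A) (D : A →L[ℂ] M.carrier) : Prop :=
  ∃ x : M.carrier, ∀ a : A, D a = M.lsmul a x - M.rsmul a x

/-- `D` is approximately inner: there is a net `(x_i)` in `M` with
`D a = lim_i (a·x_i − x_i·a)` for every `a`. -/
def IsApproxInner (M : BBimod A) (D : A →L[ℂ] M.carrier) : Prop :=
  ∃ (ι : Type) (l : Filter ι) (x : ι → M.carrier), l.NeBot ∧
    ∀ a : A, Tendsto (fun i => M.lsmul a (x i) - M.rsmul a (x i)) l (𝓝 (D a))

variable (A)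

/-- `A` is weakly amenable. -/
def WeaklyAmenable : Prop :=
  ∀ D : A →L[ℂ] (iterDual A 1).carrier, IsDerivation (iterDual A 1) D → IsInner (iterDual A 1) D

/-- `A` is approximately `n`-weakly amenable. -/
def ApproxNWeaklyAmenable (n : ℕ) : Prop :=
  ∀ D : A →L[ℂ] (iterDual A n).carrier,
    IsDerivation (iterDual A n) D → IsApproxInner (iterDual A n) D

/-- `A` is `n`-weakly amenable. -/
def NWeaklyAmenable (n : ℕ) : Prop :=
  ∀ D : A →L[ℂ] (iterDual A n).carrier,
    IsDerivation (iterDual A n) D → IsInner (iterDual A n) D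

/-- `A` is approximately weakly amenable. -/
def ApproxWeaklyAmenable : Prop := ApproxNWeaklyAmenable A 1

/-- `A` is approximately amenable: every continuous derivation into the dual of a
Banach `A`-bimodule is approximately inner. -/
def ApproxAmenable : Prop :=
  ∀ (X : BBimod A) (D : A →L[ℂ] X.dual.carrier), IsDerivation X.dual D → IsApproxInner X.dual D

section Concrete
variable (A : Type) [NonUnitalNormedRing A] [NormedSpace ℂ A]
  [IsScalarTower ℂ A A] [SMulCommClass ℂ A A]

/-- The left action of `A` on its dual `A*`: `(a·f)(b) = f (b * a)`. -/
noncomputable def lact (a : A) (f : A →L[ℂ] ℂ) : A →L[ℂ] ℂ :=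
  f.comp ((ContinuousLinearMap.mul ℂ A).flip a)

/-- The right action of `A` on its dual `A*`: `(f·a)(b) = f (a * b)`. -/
noncomputable def ract (a : A) (f : A →L[ℂ] ℂ) : A →L[ℂ] ℂ :=
  f.comp (ContinuousLinearMap.mul ℂ A a)

variable [CompleteSpace A]

/-- `A` is approximately cyclic amenable: every continuous cyclic derivation
`D : A → A*` is approximately inner. -/
def ApproxCyclicAmenable : Prop :=
  ∀ D : A →L[ℂ] (A →L[ℂ] ℂ),
    (∀ a b : A, D (a * b) = lact A a (D b) + ract A b (D a)) →
    (∀ a b : A, D a b + D b a = 0) →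
    ∃ (ι : Type) (l : Filter ι) (x : ι → (A →L[ℂ] ℂ)), l.NeBot ∧
      ∀ a : A, Tendsto (fun i => lact A a (x i) - ract A a (x i)) l (𝓝 (D a))

/-- `A` has a bounded (two-sided) approximate identity. -/
def HasBAI : Prop :=
  ∃ (ι : Type) (l : Filter ι) (e : ι → A) (C : ℝ), l.NeBot ∧ (∀ i, ‖e i‖ ≤ C) ∧
    ∀ a : A, Tendsto (fun i => e i * a) l (𝓝 a) ∧ Tendsto (fun i => a * e i) l (𝓝 a)

end Concrete
variable (A : Type) [NonUnitalNormedRing A] [NormedSpace ℂ A]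
  [IsScalarTower ℂ A A] [SMulCommClass ℂ A A] [CompleteSpace A]

noncomputable instance nonUnitalSubalgebraNormedSpaceComplex {E : Type} [NonUnitalNormedRing E]
    [NormedSpace ℂ E] (s : NonUnitalSubalgebra ℂ E) : NormedSpace ℂ s :=
  SubmoduleClass.toNormedSpace s

/-! The projection `P : A → B` along the ideal `I` is a continuous homomorphism retracting the
inclusion `ι : B → A`. A (cyclic) derivation `D : B → B*` therefore pulls back to the (cyclic)
derivation `P* D P : A → A*`. Restriction `ι* : A* → B*` intertwines the actions of `B` and sends
`(P* D P)(b)` to `D b`, so it carries a net approximating `P* D P` by inner derivations to one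
approximating `D`. -/

open Submodule in
theorem NonUnitalSubalgebra.projectionOnto_mul {R E : Type} [CommRing R] [NonUnitalRing E]
    [Module R E] {B I : NonUnitalSubalgebra R E}
    (hl : ∀ a x : E, x ∈ I → a * x ∈ I) (hr : ∀ a x : E, x ∈ I → x * a ∈ I)
    (hcompl : IsCompl B.toSubmodule I.toSubmodule) (a c : E) :
    (B.toSubmodule.projectionOnto I.toSubmodule hcompl (a * c) : E) =
      B.toSubmodule.projectionOnto I.toSubmodule hcompl a *
        B.toSubmodule.projectionOnto I.toSubmodule hcompl c := by
  set P := B.toSubmodule.projectionOnto I.toSubmodule hcompl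
  have hres : ∀ x : E, x - P x ∈ I := fun x => (projectionOnto_apply_eq_zero_iff hcompl).1 <| by
    rw [map_sub, projectionOnto_apply_left, sub_self]
  have hsplit : a * c = P a * P c + (P a * (c - P c) + (a - P a) * c) := by noncomm_ring
  have hrest : P a * (c - P c) + (a - P a) * c ∈ I := add_mem (hl _ _ (hres c)) (hr _ _ (hres a))
  have hprod : (P a : E) * P c ∈ B := mul_mem (P a).2 (P c).2
  rw [hsplit, map_add, projectionOnto_apply_of_mem_right hcompl hrest, add_zero,
    projectionOnto_apply_of_mem_left hcompl hprod]

section DualDerivation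

variable {E F : Type} [NonUnitalNormedRing E] [NormedSpace ℂ E] [NonUnitalNormedRing F]
  [NormedSpace ℂ F]

noncomputable def dualPullback (P : E →L[ℂ] F) (D : F →L[ℂ] (F →L[ℂ] ℂ)) :
    E →L[ℂ] (E →L[ℂ] ℂ) :=
  (precomp ℂ P).comp (D.comp P)

@[simp]
theorem dualPullback_apply (P : E →L[ℂ] F) (D : F →L[ℂ] (F →L[ℂ] ℂ)) (a x : E) :
    dualPullback P D a x = D (P a) (P x) :=
  rfl

variable [IsScalarTower ℂ E E] [SMulCommClass ℂ E E] [IsScalarTower ℂ F F] [SMulCommClass ℂ F F]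

variable (E) in
def IsDualDerivation (D : E →L[ℂ] (E →L[ℂ] ℂ)) : Prop :=
  ∀ a b : E, D (a * b) = lact E a (D b) + ract E b (D a)

variable (E) in
def IsApproxInnerDual (D : E →L[ℂ] (E →L[ℂ] ℂ)) : Prop :=
  ∃ (ι : Type) (l : Filter ι) (x : ι → (E →L[ℂ] ℂ)), l.NeBot ∧
    ∀ a : E, Tendsto (fun i => lact E a (x i) - ract E a (x i)) l (𝓝 (D a))

theorem IsDualDerivation.dualPullback {P : E →L[ℂ] F} (hP : ∀ a c, P (a * c) = P a * P c)
    {D : F →L[ℂ] (F →L[ℂ] ℂ)} (hD : IsDualDerivation F D) :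
    IsDualDerivation E (dualPullback P D) := by
  intro a c
  ext x
  simp [lact, ract, hP, hD (P a) (P c)]

theorem precomp_lact {φ : F →L[ℂ] E} (hφ : ∀ a b, φ (a * b) = φ a * φ b) (b : F)
    (f : E →L[ℂ] ℂ) : precomp ℂ φ (lact E (φ b) f) = lact F b (precomp ℂ φ f) := by
  ext x
  simp [lact, hφ]

theorem precomp_ract {φ : F →L[ℂ] E} (hφ : ∀ a b, φ (a * b) = φ a * φ b) (b : F)
    (f : E →L[ℂ] ℂ) : precomp ℂ φ (ract E (φ b) f) = ract F b (precomp ℂ φ f) := by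
  ext x
  simp [ract, hφ]

theorem IsApproxInnerDual.of_dualPullback {P : E →L[ℂ] F} {φ : F →L[ℂ] E}
    (hφ : ∀ a b, φ (a * b) = φ a * φ b) (hPφ : ∀ b, P (φ b) = b) {D : F →L[ℂ] (F →L[ℂ] ℂ)}
    (h : IsApproxInnerDual E (dualPullback P D)) : IsApproxInnerDual F D := by
  obtain ⟨ι, l, x, hl, hx⟩ := h
  refine ⟨ι, l, fun i => precomp ℂ φ (x i), hl, fun b => ?_⟩
  have hrestrict : precomp ℂ φ (dualPullback P D (φ b)) = D b := by
    ext y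
    simp [hPφ]
  have := ((precomp ℂ φ).continuous.tendsto _).comp (hx (φ b))
  simpa only [Function.comp_def, map_sub, precomp_lact hφ, precomp_ract hφ, hrestrict] using this

theorem approxCyclicAmenable_iff :
    ApproxCyclicAmenable E ↔
      ∀ D, IsDualDerivation E D → (∀ a b, D a b + D b a = 0) → IsApproxInnerDual E D :=
  Iff.rfl

variable [CompleteSpace E] in
theorem approxWeaklyAmenable_iff :
    ApproxWeaklyAmenable E ↔ ∀ D, IsDualDerivation E D → IsApproxInnerDual E D :=
  Iff.rfl

end DualDerivation

/-- If `A = B ⊕ I` with `B` a closed subalgebra and `I` a closed ideal, then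
approximate weak (resp. cyclic) amenability of `A` passes to `B`. -/
theorem subalgebra_approxWeaklyAmenable_of_direct_sum
    (B : NonUnitalSubalgebra ℂ A) (hBclosed : IsClosed (B : Set A))
    [CompleteSpace ↥B]
    (I : NonUnitalSubalgebra ℂ A) (hIclosed : IsClosed (I : Set A))
    (hl : ∀ (a x : A), x ∈ I → a * x ∈ I) (hr : ∀ (a x : A), x ∈ I → x * a ∈ I)
    (hcompl : IsCompl B.toSubmodule I.toSubmodule) :
    (ApproxWeaklyAmenable A → ApproxWeaklyAmenable ↥B) ∧
    (ApproxCyclicAmenable A → ApproxCyclicAmenable ↥B) := by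
  let φ : B →L[ℂ] A := B.toSubmodule.subtypeL
  let P : A →L[ℂ] B := B.toSubmodule.projectionOntoL I.toSubmodule
    (Submodule.IsCompl.isTopCompl_of_isClosed hcompl hBclosed hIclosed)
  have hφ : ∀ a b, φ (a * b) = φ a * φ b := fun _ _ => rfl
  have hPφ : ∀ b, P (φ b) = b := Submodule.projectionOntoL_apply_left (p := B.toSubmodule) _
  have hPmul : ∀ a c, P (a * c) = P a * P c := fun a c =>
    Subtype.ext (NonUnitalSubalgebra.projectionOnto_mul hl hr hcompl a c)
  rw [approxWeaklyAmenable_iff, approxWeaklyAmenable_iff, approxCyclicAmenable_iff,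
    approxCyclicAmenable_iff]
  refine ⟨fun hA D hD => ?_, fun hA D hD hcyc => ?_⟩
  · exact .of_dualPullback hφ hPφ (hA _ (hD.dualPullback hPmul))
  · exact .of_dualPullback hφ hPφ (hA _ (hD.dualPullback hPmul) fun a c => hcyc (P a) (P c))
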